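/- For every integer n ≥ 2, (P_n / P_{n-1})^(n(n+1)) > P_n^2 · (P_{n+1} / P_n)^(n(n-1)). -/

import Mathlib

/-!
Write `r_n = P_n / P_{n-1}` and `ℓ_n = log P_n`. In logarithms the inequality at `n` reads
`E_n = 2(n^2 - 1) ℓ_n - n(n+1) ℓ_{n-1} - n(n-1) ℓ_{n+1} > 0`, and
`E_{n+1} - E_n = n(n+1) (ℓ_{n-1} - 3ℓ_n + 3ℓ_{n+1} - ℓ_{n+2})`, which is `≥ 0` exactly
when `r_n r_{n+2} ≤ r_{n+1}^2`. Since `E_2 > 0`, it suffices that the ratios are log-concave.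

Running the recurrence backwards and forwards, `r_n` and `r_{n+2}` are rational functions of
`y = r_{n+1}`, and log-concavity becomes `g(y) ≥ 0` for a quartic `g` with leading term
`-(n+1)^2 (n+2)^2 y^4`. With `m = n + 1`, `g` is concave for `y ≥ 12 - 4/m` and nonnegative
at both ends of `12 - 4/m ≤ y ≤ 16 - 16/m + 16/m^3`. That interval contains `r_m` for every
`m ≥ 2`: the map `r_m ↦ r_{m+1}` is increasing and sends each interval into the next, and at
`m = 2` both bounds are equalities.
-/

theorem monotone_of_third_diff_nonpos (ℓ : ℕ → ℝ)
    (h : ∀ k, ℓ (k + 3) - 3 * ℓ (k + 2) + 3 * ℓ (k + 1) - ℓ k ≤ 0) :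
    Monotone fun k : ℕ =>
      2 * (k : ℝ) * (k + 2) * ℓ (k + 1) - ((k : ℝ) + 1) * (k + 2) * ℓ k
        - (k : ℝ) * (k + 1) * ℓ (k + 2) := by
  refine monotone_nat_of_le_succ fun k => ?_
  have := mul_nonneg (by positivity : (0 : ℝ) ≤ ((k : ℝ) + 1) * (k + 2)) (neg_nonneg.2 (h k))
  push_cast
  linear_combination this

theorem quartic_nonneg_of_endpoints {p q r s L U y : ℝ} (hq : 0 ≤ q) (hL : 0 ≤ L)
    (hpL : p ≤ 2 * q * L) (hLy : L ≤ y) (hyU : y ≤ U)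
    (hfL : 0 ≤ L ^ 3 * (p - q * L) + r * L + s) (hfU : 0 ≤ U ^ 3 * (p - q * U) + r * U + s) :
    0 ≤ y ^ 3 * (p - q * y) + r * y + s := by
  rcases (hLy.trans hyU).eq_or_lt with rfl | hLU
  · rwa [le_antisymm hyU hLy]
  obtain ⟨hyL, hUy, hUL⟩ : 0 ≤ y - L ∧ 0 ≤ U - y ∧ 0 < U - L :=
    ⟨sub_nonneg.2 hLy, sub_nonneg.2 hyU, sub_pos.2 hLU⟩
  -- `-f[L, U, y]` for `f y = y ^ 3 * (p - q * y) + r * y + s`, which `p ≤ 2 q L` makes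
  -- concave on `[L, ∞)`
  have hdd : 0 ≤ q * ((U - L) * (U + L) + (y - L) * (y + U)) + (2 * q * L - p) * (L + U + y) := by
    have := sub_nonneg.2 hpL
    have := hL.trans hLy
    have := hL.trans hLU.le
    positivity
  refine nonneg_of_mul_nonneg_right ?_ hUL
  calc 0 ≤ (U - y) * (L ^ 3 * (p - q * L) + r * L + s)
        + (y - L) * (U ^ 3 * (p - q * U) + r * U + s) + (U - L) * (y - L) * (U - y) *
          (q * ((U - L) * (U + L) + (y - L) * (y + U)) + (2 * q * L - p) * (L + U + y)) := by
        positivity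
    _ = (U - L) * (y ^ 3 * (p - q * y) + r * y + s) := by ring

/-- The recurrence of the statement at `n = k + 1`. -/
def CLFRecurrence (P : ℕ → ℝ) : Prop :=
  ∀ k : ℕ, ((k : ℝ) + 2) ^ 2 * P (k + 2)
    = 8 * (3 * (k : ℝ) ^ 2 + 9 * k + 7) * P (k + 1) - 128 * ((k : ℝ) + 1) ^ 2 * P k

/-- The quartic of the header for `n = k + 1`, homogenised: `a ^ 4 * g (b / a)`. -/
def clfQuartic (k a b : ℝ) : ℝ :=
  (k + 3) ^ 2 * b ^ 3 * (8 * (3 * k ^ 2 + 9 * k + 7) * a - (k + 2) ^ 2 * b)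
    - 128 * (k + 1) ^ 2 * a ^ 3 * (8 * (3 * k ^ 2 + 15 * k + 19) * b - 128 * (k + 2) ^ 2 * a)

theorem clfQuartic_nonneg (k : ℕ) {a b : ℝ} (ha : 0 < a)
    (hlow : (12 * (k : ℝ) + 20) * a ≤ ((k : ℝ) + 2) * b)
    (hup : ((k : ℝ) + 2) ^ 3 * b ≤ 16 * (((k : ℝ) + 1) * (k + 2) ^ 2 + 1) * a) :
    0 ≤ clfQuartic k a b := by
  -- in `z = (k + 2) ^ 3 * b / a` both ends of the interval, and the values there, are polynomials
  -- in `k` with nonnegative coefficients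
  have hz := quartic_nonneg_of_endpoints
    (p := 8 * ((k : ℝ) + 2) ^ 3 * (k + 3) ^ 2 * (3 * k ^ 2 + 9 * k + 7))
    (q := ((k : ℝ) + 2) ^ 2 * (k + 3) ^ 2)
    (r := -1024 * ((k : ℝ) + 1) ^ 2 * (k + 2) ^ 9 * (3 * k ^ 2 + 15 * k + 19))
    (s := 16384 * ((k : ℝ) + 1) ^ 2 * (k + 2) ^ 14)
    (L := (12 * (k : ℝ) + 20) * (k + 2) ^ 2) (U := 16 * (((k : ℝ) + 1) * (k + 2) ^ 2 + 1))
    (y := ((k : ℝ) + 2) ^ 3 * b / a) (by positivity) (by positivity)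
    (by rw [← sub_nonneg]; ring_nf; positivity)
    (by rw [le_div_iff₀ ha]; nlinarith [hlow])
    (by rw [div_le_iff₀ ha]; nlinarith [hup])
    (by ring_nf; positivity) (by ring_nf; positivity)
  refine nonneg_of_mul_nonneg_right (a := ((k : ℝ) + 2) ^ 12) ?_ (by positivity)
  convert mul_nonneg hz (pow_nonneg ha.le 4) using 1
  unfold clfQuartic
  field_simp
  ring

theorem log_cube_mul {a b : ℝ} (ha : 0 < a) (hb : 0 < b) :
    Real.log (a ^ 3 * b) = 3 * Real.log a + Real.log b := by
  rw [Real.log_mul (pow_pos ha 3).ne' hb.ne', Real.log_pow]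
  norm_num

namespace CLFRecurrence

variable {P : ℕ → ℝ}

theorem succ (hrec : CLFRecurrence P) (k : ℕ) :
    ((k : ℝ) + 3) ^ 2 * P (k + 3)
      = 8 * (3 * (k : ℝ) ^ 2 + 15 * k + 19) * P (k + 2)
        - 128 * ((k : ℝ) + 2) ^ 2 * P (k + 1) := by
  have h := hrec (k + 1)
  push_cast at h
  linear_combination h

theorem ratio_lower_bound (hrec : CLFRecurrence P) (hpos : ∀ n, 0 < P n)
    (h₀ : 20 * P 1 ≤ 2 * P 2) (k : ℕ) :
    (12 * (k : ℝ) + 20) * P (k + 1) ≤ ((k : ℝ) + 2) * P (k + 2) := by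
  induction k with
  | zero => simpa using h₀
  | succ k ih =>
    have key : (3 * (k : ℝ) + 5) * (k + 3) * ((k + 3) * P (k + 3) - (12 * k + 32) * P (k + 2))
        = 32 * ((k : ℝ) + 2) ^ 2 * ((k + 2) * P (k + 2) - (12 * k + 20) * P (k + 1))
          + 4 * ((k : ℝ) + 1) * (k + 2) * (k + 3) * P (k + 2) := by
      linear_combination (3 * (k : ℝ) + 5) * hrec.succ k
    suffices 0 ≤ ((k : ℝ) + 3) * P (k + 3) - (12 * k + 32) * P (k + 2) by push_cast; linarith
    refine nonneg_of_mul_nonneg_right (a := (3 * (k : ℝ) + 5) * (k + 3)) ?_ (by positivity)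
    have := sub_nonneg.2 ih
    have := hpos (k + 2)
    rw [key]
    positivity

theorem ratio_upper_bound (hrec : CLFRecurrence P) (hpos : ∀ n, 0 < P n)
    (h₀ : 8 * P 2 ≤ 80 * P 1) (k : ℕ) :
    ((k : ℝ) + 2) ^ 3 * P (k + 2) ≤ 16 * (((k : ℝ) + 1) * (k + 2) ^ 2 + 1) * P (k + 1) := by
  induction k with
  | zero => norm_num; linarith
  | succ k ih =>
    have key : 16 * (((k : ℝ) + 1) * (k + 2) ^ 2 + 1)
          * (16 * (((k : ℝ) + 2) * (k + 3) ^ 2 + 1) * P (k + 2) - (k + 3) ^ 3 * P (k + 3))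
        = 128 * ((k : ℝ) + 2) ^ 2 * (k + 3)
            * (16 * (((k : ℝ) + 1) * (k + 2) ^ 2 + 1) * P (k + 1) - (k + 2) ^ 3 * P (k + 2))
          + 128 * (2 * (k : ℝ) ^ 3 + 9 * k ^ 2 + 10 * k + 1) * P (k + 2) := by
      linear_combination (-16 * (((k : ℝ) + 1) * (k + 2) ^ 2 + 1) * (k + 3)) * hrec.succ k
    suffices 0 ≤ 16 * (((k : ℝ) + 2) * (k + 3) ^ 2 + 1) * P (k + 2) - (k + 3) ^ 3 * P (k + 3) by
      push_cast; linarith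
    refine nonneg_of_mul_nonneg_right
      (a := 16 * (((k : ℝ) + 1) * (k + 2) ^ 2 + 1)) ?_ (by positivity)
    have := sub_nonneg.2 ih
    have := hpos (k + 2)
    rw [key]
    positivity

theorem ratio_logConcave (hrec : CLFRecurrence P) (hpos : ∀ n, 0 < P n)
    (hlow₀ : 20 * P 1 ≤ 2 * P 2) (hup₀ : 8 * P 2 ≤ 80 * P 1) (k : ℕ) :
    P (k + 1) ^ 3 * P (k + 3) ≤ P (k + 2) ^ 3 * P k := by
  have key : 128 * ((k : ℝ) + 1) ^ 2 * (k + 3) ^ 2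
        * (P (k + 2) ^ 3 * P k - P (k + 1) ^ 3 * P (k + 3))
      = clfQuartic k (P (k + 1)) (P (k + 2)) := by
    unfold clfQuartic
    linear_combination (((k : ℝ) + 3) ^ 2 * P (k + 2) ^ 3) * hrec k
      - (128 * ((k : ℝ) + 1) ^ 2 * P (k + 1) ^ 3) * hrec.succ k
  rw [← sub_nonneg]
  refine nonneg_of_mul_nonneg_right ?_
    (by positivity : (0 : ℝ) < 128 * ((k : ℝ) + 1) ^ 2 * (k + 3) ^ 2)
  rw [key]
  exact clfQuartic_nonneg k (hpos _)
    (hrec.ratio_lower_bound hpos hlow₀ k) (hrec.ratio_upper_bound hpos hup₀ k)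

theorem log_third_diff_nonpos (hrec : CLFRecurrence P) (hpos : ∀ n, 0 < P n)
    (hlow₀ : 20 * P 1 ≤ 2 * P 2) (hup₀ : 8 * P 2 ≤ 80 * P 1) (k : ℕ) :
    Real.log (P (k + 3)) - 3 * Real.log (P (k + 2)) + 3 * Real.log (P (k + 1))
      - Real.log (P k) ≤ 0 := by
  have h := Real.log_le_log (mul_pos (pow_pos (hpos _) 3) (hpos _))
    (hrec.ratio_logConcave hpos hlow₀ hup₀ k)
  rw [log_cube_mul (hpos _) (hpos _), log_cube_mul (hpos _) (hpos _)] at h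
  linarith

end CLFRecurrence

theorem lt_ratio_pow_of_log {P : ℕ → ℝ} (hpos : ∀ n, 0 < P n) (k : ℕ)
    (hE : 0 < 2 * ((k : ℝ) + 1) * (k + 3) * Real.log (P (k + 2))
      - ((k : ℝ) + 2) * (k + 3) * Real.log (P (k + 1))
      - ((k : ℝ) + 1) * (k + 2) * Real.log (P (k + 3))) :
    P (k + 2) ^ 2 * (P (k + 3) / P (k + 2)) ^ ((k + 2) * (k + 1))
      < (P (k + 2) / P (k + 1)) ^ ((k + 2) * (k + 3)) := by
  have h₁ := hpos (k + 1)
  have h₂ := hpos (k + 2)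
  have h₃ := hpos (k + 3)
  rw [← Real.log_lt_log_iff (by positivity) (by positivity),
    Real.log_mul (by positivity) (by positivity)]
  simp only [Real.log_pow, Real.log_div h₂.ne' h₁.ne', Real.log_div h₃.ne' h₂.ne']
  push_cast
  linear_combination hE

theorem Pn_ratio_power_ineq (P : ℕ → ℝ)
    (hP0 : P 0 = 1) (hP1 : P 1 = 8)
    (hPrec : ∀ n : ℕ, 1 ≤ n →
      ((n : ℝ) + 1) ^ 2 * P (n + 1)
        = 8 * (3 * (n : ℝ) ^ 2 + 3 * (n : ℝ) + 1) * P n - 128 * (n : ℝ) ^ 2 * P (n - 1))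
    (hPpos : ∀ n : ℕ, 0 < P n) :
    ∀ n : ℕ, 2 ≤ n →
      (P n / P (n - 1)) ^ (n * (n + 1)) > P n ^ 2 * (P (n + 1) / P n) ^ (n * (n - 1)) := by
  have hrec : CLFRecurrence P := fun k => by
    have h := hPrec (k + 1) (by omega)
    push_cast at h
    linear_combination h
  have hP2 : P 2 = 80 := by
    have h := hrec 0
    norm_num [hP0, hP1] at h
    linarith
  have hP3 : P 3 = 896 := by
    have h := hrec 1
    norm_num [hP1, hP2] at h
    linarith
  have hmono := monotone_of_third_diff_nonpos (fun n => Real.log (P n))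
    (hrec.log_third_diff_nonpos hPpos (by rw [hP1, hP2]; norm_num) (by rw [hP1, hP2]; norm_num))
  have hbase := Real.log_lt_log (mul_pos (pow_pos (hPpos 1) 3) (hPpos 3))
    (show P 1 ^ 3 * P 3 < P 2 ^ 3 by rw [hP1, hP2, hP3]; norm_num)
  rw [log_cube_mul (hPpos _) (hPpos _), Real.log_pow] at hbase
  intro n hn
  obtain ⟨k, rfl⟩ : ∃ k, n = k + 2 := ⟨n - 2, by omega⟩
  refine lt_ratio_pow_of_log hPpos k ?_
  have h := hmono (Nat.le_add_left 1 k)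
  norm_num at h hbase
  linarith
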